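/- For all integers d ≥ 1 and all integers m, n with 0 < m < n, the integer lcm(n+1, m·d)/(m·d) divides ∑_{i=0}^{n−m+1} (−1)^i · C(n+1, i) · C(n+1−i, m) · d^{n−i}, where C(·,·) denotes the binomial coefficient. -/

import Mathlib

/-!
Writing `n + 1 = m + N`, the identity `C(n+1, i) C(n+1-i, m) = C(n+1, m) C(N, i)` and the
binomial theorem collapse the sum to `C(n+1, m) d^(m-1) (d-1)^N` (both sides vanish when
`m > n + 1`). Since `m C(n+1, m) = (n+1) C(n, m-1)`, multiplying it by `m d` gives a multiple of
`n + 1`; and `a ∣ b x` forces `lcm a b / b ∣ x`, because `lcm a b ∣ b x`.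
-/

open Finset

theorem Nat.choose_mul_choose_sub {n i m : ℕ} (h : i + m ≤ n) :
    n.choose i * (n - i).choose m = n.choose m * (n - m).choose i := by
  rw [← Nat.choose_symm (by omega : i ≤ n), Nat.choose_mul (by omega : m ≤ n - i),
    show n - i - m = n - m - i by omega, Nat.choose_symm (by omega : i ≤ n - m)]

theorem Nat.add_one_dvd_mul_choose (n k : ℕ) : n + 1 ∣ k * (n + 1).choose k := by
  cases k with
  | zero => simp
  | succ k => exact ⟨n.choose k, by rw [mul_comm, Nat.add_one_mul_choose_eq]⟩

theorem sum_range_neg_one_pow_mul_choose_mul_pow {R : Type*} [CommRing R] (d : R) (N : ℕ) :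
    ∑ i ∈ range (N + 1), (-1 : R) ^ i * N.choose i * d ^ (N - i) = (d - 1) ^ N := by
  rw [sub_eq_neg_add, add_pow]
  exact sum_congr rfl fun i _ => by ring

theorem alternating_sum_choose_mul_choose_mul_pow {R : Type*} [CommRing R] (d : R) {m : ℕ}
    (hm : 0 < m) (n : ℕ) :
    ∑ i ∈ range (n - m + 2), (-1 : R) ^ i * (n + 1).choose i * (n + 1 - i).choose m * d ^ (n - i)
      = (n + 1).choose m * d ^ (m - 1) * (d - 1) ^ (n + 1 - m) := by
  rcases le_or_gt m (n + 1) with hmn | hmn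
  · have hvanish : ∀ i ∈ range (n - m + 2), i ∉ range (n + 1 - m + 1) →
        (-1 : R) ^ i * (n + 1).choose i * (n + 1 - i).choose m * d ^ (n - i) = 0 := by
      intro i _ hi
      rw [mem_range] at hi
      simp [Nat.choose_eq_zero_of_lt (by omega : n + 1 - i < m)]
    rw [← sum_subset (range_subset_range.mpr (by omega)) hvanish,
      ← sum_range_neg_one_pow_mul_choose_mul_pow, mul_sum]
    refine sum_congr rfl fun i hi => ?_
    have hi : i + m ≤ n + 1 := by rw [mem_range] at hi; omega
    have hchoose := congrArg (Nat.cast : ℕ → R) (Nat.choose_mul_choose_sub hi)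
    push_cast at hchoose
    rw [show n - i = m - 1 + (n + 1 - m - i) by omega, pow_add]
    linear_combination (-1 : R) ^ i * d ^ (m - 1) * d ^ (n + 1 - m - i) * hchoose
  · rw [Nat.choose_eq_zero_of_lt hmn, Nat.cast_zero, zero_mul, zero_mul]
    refine sum_eq_zero fun i _ => ?_
    simp [Nat.choose_eq_zero_of_lt (by omega : n + 1 - i < m)]

theorem Nat.lcm_div_dvd_of_dvd_mul {a b x : ℕ} (hb : b ≠ 0) (h : a ∣ b * x) :
    a.lcm b / b ∣ x := by
  have hlcm : a.lcm b ∣ b * x := Nat.lcm_dvd h (dvd_mul_right b x)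
  rwa [← Nat.mul_div_cancel' (Nat.dvd_lcm_right a b), Nat.mul_dvd_mul_iff_left (by omega)] at hlcm

theorem Int.natCast_lcm_div_dvd_of_dvd_mul {a b : ℕ} {x : ℤ} (hb : b ≠ 0) (h : (a : ℤ) ∣ b * x) :
    ((a.lcm b / b : ℕ) : ℤ) ∣ x := by
  rw [Int.natCast_dvd] at h ⊢
  rw [Int.natAbs_mul, Int.natAbs_natCast] at h
  exact Nat.lcm_div_dvd_of_dvd_mul hb h

theorem stmt_6_general (d m n : ℕ) (hd : 1 ≤ d) (hm : 0 < m) :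
    ((Nat.lcm (n + 1) (m * d) / (m * d) : ℕ) : ℤ) ∣
      ∑ i ∈ Finset.range (n - m + 2),
        (-1 : ℤ) ^ i * (Nat.choose (n + 1) i : ℤ) * (Nat.choose (n + 1 - i) m : ℤ)
          * (d : ℤ) ^ (n - i) := by
  rw [alternating_sum_choose_mul_choose_mul_pow _ hm]
  refine Int.natCast_lcm_div_dvd_of_dvd_mul (by positivity) ?_
  have hpascal : (n + 1 : ℤ) ∣ m * (n + 1).choose m := mod_cast Nat.add_one_dvd_mul_choose n m
  exact hpascal.trans ⟨d * d ^ (m - 1) * (d - 1) ^ (n + 1 - m), by push_cast; ring⟩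

/-- For all integers `d ≥ 1` and all `m`, `n` with `0 < m < n`, the integer
`lcm (n+1) (m*d) / (m*d)` divides
`∑_{i=0}^{n−m+1} (−1)^i · C(n+1, i) · C(n+1−i, m) · d^{n−i}`. -/
theorem stmt_6 (d m n : ℕ) (hd : 1 ≤ d) (hm : 0 < m) (hmn : m < n) :
    ((Nat.lcm (n + 1) (m * d) / (m * d) : ℕ) : ℤ) ∣
      ∑ i ∈ Finset.range (n - m + 2),
        (-1 : ℤ) ^ i * (Nat.choose (n + 1) i : ℤ) * (Nat.choose (n + 1 - i) m : ℤ)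
          * (d : ℤ) ^ (n - i) :=
  stmt_6_general d m n hd hm
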